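/- arXiv:1412.8337 — 2 statements merged into one kernel-verified Lean document; each statement's English description precedes it below -/
import Mathlib

section
/- Let ₂dΨ^{k+1}_{k,ξ} be the coordinate change map conjugating (₂dF_{k,ξ})² with ₂dF_{k+1,ξ}, obtained by projecting the three-dimensional coordinate change Ψ^{k+1}_k between invariant surfaces Q_{k+1} = graph(ξ_{k+1}) and Q_k = graph(ξ_k). Then for every k ∈ ℕ, ₂dΨ^{k+1}_{k,ξ} = H_{k,ξ}⁻¹ ∘ Λ_k⁻¹, where H_{k,ξ}(x,y) = (f_k(x) − ε_k(x,y,ξ_k(x,y)), y) and Λ_k⁻¹(x,y) = (σ_k x, σ_k y). -/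
/-!
Common background definitions for the renormalization theory of (two- and
three-dimensional) Hénon-like maps, following the paper
"Renormalization of Cʳ Hénon maps".

Words in W^n = {v,c}^n are encoded as lists of booleans (`false` = v, `true` = c).
-/

noncomputable section

open Set Filter Metric MeasureTheory Topology

abbrev R3 : Type := ℝ × ℝ × ℝ
abbrev R2 : Type := ℝ × ℝ

/-- Projection of ℝ³ onto the xy-plane. -/
def pxy (w : R3) : R2 := (w.1, w.2.1)

/-- Jacobian determinant of a self-map of ℝ³. -/
def Jac3 (G : R3 → R3) (w : R3) : ℝ := LinearMap.det (fderiv ℝ G w).toLinearMap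

/-- Jacobian determinant of a self-map of ℝ². -/
def Jac2 (G : R2 → R2) (w : R2) : ℝ := LinearMap.det (fderiv ℝ G w).toLinearMap

/-- Minimal distance between two sets: `dist_min(S,T) = inf {dist p q | p ∈ S, q ∈ T}`. -/
def setDist {α : Type} [PseudoMetricSpace α] (S T : Set α) : ℝ :=
  sInf (Set.image2 dist S T)

/-- A three-dimensional Hénon-like map
`F(x,y,z) = (f(x) - ε(x,y,z), x, δ(x,y,z))` on a (cubic) box `B`,
with `‖ε‖, ‖δ‖ ≤ ε̄`. -/
structure Henon3 (εb : ℝ) where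
  f : ℝ → ℝ
  ε : R3 → ℝ
  δ : R3 → ℝ
  box : Set R3
  ε_small : ∀ w ∈ box, |ε w| ≤ εb
  δ_small : ∀ w ∈ box, |δ w| ≤ εb

namespace Henon3
variable {εb : ℝ}
/-- The Hénon-like map itself. -/
def map (F : Henon3 εb) : R3 → R3 := fun w => (F.f w.1 - F.ε w, w.1, F.δ w)
end Henon3

/-- An infinitely renormalizable three-dimensional Hénon-like map `F ∈ 𝓘(ε̄)`,
together with the data produced by the renormalization microscope: the n-th
renormalizations `RⁿF` (again Hénon-like, given by `Rf n`, `Rε n`, `Rδ n` on the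
domain `dom n`), the pieces `Bⁿ_𝐰` (indexed by words `𝐰 ∈ {v,c}ⁿ`, encoded as lists
of booleans of length `n` with `false` = v, `true` = c), satisfying
`diam Bⁿ_𝐰 ≤ C σⁿ` and forward invariance under `F^{2ⁿ}`, and the unique invariant
ergodic probability measure `μ` on the critical Cantor set `𝒪_F = ⋂ₙ ⋃_𝐰 Bⁿ_𝐰`. -/
structure IR3 (εb : ℝ) extends Henon3 εb where
  Rf : ℕ → ℝ → ℝ
  Rε : ℕ → R3 → ℝ
  Rδ : ℕ → R3 → ℝ
  Rf_zero : Rf 0 = f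
  Rε_zero : Rε 0 = ε
  Rδ_zero : Rδ 0 = δ
  dom : ℕ → Set R3
  dom_zero : dom 0 = box
  piece : List Bool → Set R3
  piece_nil : piece [] = box
  piece_sub : ∀ w, piece w ⊆ box
  piece_nested : ∀ w b, piece (w ++ [b]) ⊆ piece w
  piece_inv : ∀ w : List Bool,
    (fun p : R3 => (f p.1 - ε p, p.1, δ p))^[2 ^ w.length] '' piece w ⊆ piece w
  Cd : ℝ
  Cd_pos : 0 < Cd
  σ : ℝ
  σ_mem : σ ∈ Set.Ioo (0:ℝ) 1
  piece_diam : ∀ w : List Bool, Metric.diam (piece w) ≤ Cd * σ ^ w.length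
  μ : Measure R3
  μ_prob : IsProbabilityMeasure μ
  μ_inv : ∀ s : Set R3, MeasurableSet s →
    μ ((fun p : R3 => (f p.1 - ε p, p.1, δ p)) ⁻¹' s) = μ s
  μ_supp : μ ((⋂ n : ℕ, ⋃ (w : List Bool) (_ : w.length = n), piece w)ᶜ) = 0

namespace IR3
variable {εb : ℝ}

/-- The underlying Hénon-like map. -/
def map (F : IR3 εb) : R3 → R3 := F.toHenon3.map

/-- The n-th renormalization `RⁿF` as a map. -/
def Rmap (F : IR3 εb) (n : ℕ) : R3 → R3 := fun p => (F.Rf n p.1 - F.Rε n p, p.1, F.Rδ n p)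

/-- The critical Cantor set `𝒪_F`. -/
def cantor (F : IR3 εb) : Set R3 :=
  ⋂ n : ℕ, ⋃ (w : List Bool) (_ : w.length = n), F.piece w

/-- The average Jacobian `b_F = exp ∫ log Jac F dμ`. -/
def avgJac (F : IR3 εb) : ℝ := Real.exp (∫ w, Real.log (Jac3 F.map w) ∂F.μ)

/-- The set of periodic points of `F` (in the box). -/
def perSet (F : IR3 εb) : Set R3 := {w ∈ F.box | ∃ m : ℕ, 0 < m ∧ F.map^[m] w = w}

/-- The set of periodic points of the n-th renormalization `RⁿF`. -/
def perSetR (F : IR3 εb) (n : ℕ) : Set R3 :=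
  {w ∈ F.dom n | ∃ m : ℕ, 0 < m ∧ (F.Rmap n)^[m] w = w}

/-- The universal number `b₁`: the average Jacobian of the projected two-dimensional
Hénon-like map `π_{xy} ∘ F` (for toy model maps and their small perturbations). -/
def b1 (F : IR3 εb) : ℝ :=
  Real.exp (∫ p, Real.log (Jac2 (fun q : R2 => (F.f q.1 - F.ε (q.1, q.2, 0), q.1)) p)
    ∂(F.μ.map pxy))

/-- The universal number `b₂ = b_F / b₁`. -/
def b2 (F : IR3 εb) : ℝ := F.avgJac / F.b1

end IR3

/-- **The two-dimensional scaling map.** Let `₂dΨ^{k+1}_{k,ξ}` be the coordinate change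
map conjugating `(₂dF_{k,ξ})²` with `₂dF_{k+1,ξ}`, obtained by projecting the
three-dimensional coordinate change `Ψ^{k+1}_k = H_k⁻¹ ∘ Λ_k⁻¹` between the invariant
surfaces `graph(ξ_{k+1})` and `graph(ξ_k)`. Then for every `k`,
`₂dΨ^{k+1}_{k,ξ} = H_{k,ξ}⁻¹ ∘ Λ_k⁻¹` where
`H_{k,ξ}(x,y) = (f_k(x) - ε_k(x,y,ξ_k(x,y)), y)` and `Λ_k⁻¹(x,y) = (σ_k x, σ_k y)`. -/
theorem two_dim_scaling_map {εb : ℝ} (hεb : 0 < εb) (r : ℕ) (hr : 2 ≤ r)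
    (F : IR3 εb)
    (ξ : ℕ → R2 → ℝ) (hξ : ∀ k, ContDiff ℝ r (ξ k))
    (finv : ℕ → ℝ → ℝ) (hfinv : ∀ k y, F.Rf k (finv k y) = y)
    (σs : ℕ → ℝ) (hσs : ∀ k, σs k ≠ 0)
    -- `Hinv k` is the inverse of the horizontal-like diffeomorphism
    -- `H_k(x,y,z) = (f_k(x) - ε_k(x,y,z), y, z - δ_k(y, f_k⁻¹(y), 0))`:
    (Hinv : ℕ → R3 → R3)
    (hHinv : ∀ k (w : R3),
      (fun v : R3 => (F.Rf k v.1 - F.Rε k v, v.2.1,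
          v.2.2 - F.Rδ k (v.2.1, finv k v.2.1, 0))) (Hinv k w) = w)
    -- `H_k⁻¹ ∘ Λ_k⁻¹` maps `graph(ξ_{k+1})` into `graph(ξ_k)`:
    (hgraph : ∀ k (p : R2),
      (Hinv k (σs k * p.1, σs k * p.2, σs k * ξ (k+1) p)).2.2
        = ξ k ((Hinv k (σs k * p.1, σs k * p.2, σs k * ξ (k+1) p)).1,
               (Hinv k (σs k * p.1, σs k * p.2, σs k * ξ (k+1) p)).2.1))
    -- `H2inv k` is the inverse of `H_{k,ξ}(x,y) = (f_k(x) - ε_k(x,y,ξ_k(x,y)), y)`: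
    (H2inv : ℕ → R2 → R2)
    (hH2inv : ∀ k (q : R2),
      H2inv k (F.Rf k q.1 - F.Rε k (q.1, q.2, ξ k q), q.2) = q ∧
      (fun q' : R2 => (F.Rf k q'.1 - F.Rε k (q'.1, q'.2, ξ k q'), q'.2)) (H2inv k q) = q) :
    -- conclusion : ₂dΨ^{k+1}_{k,ξ} = H_{k,ξ}⁻¹ ∘ Λ_k⁻¹
    ∀ k (p : R2),
      pxy (Hinv k (σs k * p.1, σs k * p.2, σs k * ξ (k+1) p))
        = H2inv k (σs k * p.1, σs k * p.2) := by
  intro k p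
  set w : R3 := (σs k * p.1, σs k * p.2, σs k * ξ (k+1) p) with hw
  set v : R3 := Hinv k w with hv
  have h1 := hHinv k w
  have h2 := hgraph k p
  simp only [← hv, ← hw] at h1 h2
  have hx : F.Rf k v.1 - F.Rε k v = w.1 := by
    have := congrArg Prod.fst h1
    simpa using this
  have hy : v.2.1 = w.2.1 := by
    have := congrArg (fun q : R3 => q.2.1) h1
    simpa using this
  have hvξ : v = (v.1, v.2.1, ξ k (v.1, v.2.1)) := by
    rw [← h2]
  have hq := (hH2inv k (v.1, v.2.1)).1
  have hx' : F.Rf k v.1 - F.Rε k (v.1, v.2.1, ξ k (v.1, v.2.1)) = w.1 := by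
    rw [← hvξ]; exact hx
  rw [hx'] at hq
  have : H2inv k (w.1, v.2.1) = pxy v := hq
  rw [hy] at this
  exact this.symm
end
end

section
/- Given any 0 < A₀ < A₁, any 0 < σ < 1 and any p ≥ 2, the set of parameters b ∈ [0,1] for which there are infinitely many pairs of integers 0 < k < n satisfying A₀ < b^{p^k}/σ^{n−k} < A₁ is a dense G_δ subset of [0,1] with full Lebesgue measure. -/
/-!
Write `b = exp (-x)` and `t = -log σ`. Then `A₀ < b^{p^k} / σ^m < A₁` says exactly that `p^k x`
lies in `(m t - log A₁, m t - log A₀)`, so a parameter is good when `p^k x` hits this `t`-periodic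
family of intervals for infinitely many `k`. The `x` that miss it for all `k ≥ K` form a porous
set: at the scale `r = (t + ℓ) / p^k`, with `ℓ = log A₁ - log A₀`, the ball of radius `r` around
such an `x` contains a whole rescaled interval `p^{-k} (m t - log A₁, m t - log A₀)` avoiding the
set. By Lebesgue's density theorem porous sets are null, and `exp (-·)` maps null sets to null
sets. Density follows from full measure, and the Gδ property holds because "infinitely many of
countably many open conditions" is a Gδ condition.
-/

noncomputable section

open Set Filter Metric MeasureTheory Topology

open scoped ENNReal

theorem Besicovitch.measure_eq_zero_of_frequently_measure_inter_closedBall_le {β : Type*}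
    [MetricSpace β] [MeasurableSpace β] [BorelSpace β] [SecondCountableTopology β]
    [HasBesicovitchCovering β] (μ : Measure β) [IsLocallyFiniteMeasure μ] {s : Set β} {c : ℝ≥0∞}
    (hc : c < 1) (h : ∀ x ∈ s, ∃ᶠ r in 𝓝[>] 0, μ (s ∩ closedBall x r) ≤ c * μ (closedBall x r)) :
    μ s = 0 := by
  have hdensity := Besicovitch.ae_tendsto_measure_inter_div μ s
  rw [ae_iff] at hdensity
  refine (Measure.restrict_apply_superset fun x hx hlim => ?_).symm.trans hdensity
  obtain ⟨r, hle, hlt⟩ := ((h x hx).and_eventually (hlim.eventually (lt_mem_nhds hc))).exists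
  exact (ENNReal.div_le_of_le_mul hle).not_gt hlt

def IsPorous (κ : ℝ) (s : Set ℝ) : Prop :=
  ∀ x ∈ s, ∃ᶠ r in 𝓝[>] 0,
    ∃ y z, κ * r ≤ z - y ∧ Ioo y z ⊆ closedBall x r ∧ Disjoint (Ioo y z) s

theorem IsPorous.volume_eq_zero {κ : ℝ} {s : Set ℝ} (hκ : 0 < κ) (hs : IsPorous κ s) :
    volume s = 0 := by
  refine Besicovitch.measure_eq_zero_of_frequently_measure_inter_closedBall_le volume
    (c := ENNReal.ofReal (1 - κ / 2)) (ENNReal.ofReal_lt_one.2 (by linarith)) fun x hx => ?_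
  refine ((hs x hx).and_eventually self_mem_nhdsWithin).mono ?_
  rintro r ⟨⟨y, z, hlen, hsub, hdisj⟩, hr : 0 < r⟩
  have hgap : 0 ≤ z - y := (mul_pos hκ hr).le.trans hlen
  calc volume (s ∩ closedBall x r) ≤ volume (closedBall x r \ Ioo y z) :=
        measure_mono fun w hw => ⟨hw.2, fun hw' => hdisj.notMem_of_mem_left hw' hw.1⟩
    _ = ENNReal.ofReal (2 * r - (z - y)) := by
        rw [measure_sdiff hsub measurableSet_Ioo.nullMeasurableSet measure_Ioo_lt_top.ne,
          Real.volume_closedBall, Real.volume_Ioo, ← ENNReal.ofReal_sub _ hgap]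
    _ ≤ ENNReal.ofReal (1 - κ / 2) * volume (closedBall x r) := by
        rw [Real.volume_closedBall, ← ENNReal.ofReal_mul' (by positivity)]
        exact ENNReal.ofReal_le_ofReal (by linarith)

theorem Icc_subset_closure_of_volume_diff_eq_zero {a b : ℝ} {s : Set ℝ} (hab : a ≠ b)
    (hs : volume (Icc a b \ s) = 0) : Icc a b ⊆ closure s := by
  have hdense : Dense (s ∪ (Icc a b)ᶜ) := by
    refine Measure.dense_of_ae (μ := volume) (p := fun x => x ∈ s ∪ (Icc a b)ᶜ) ?_
    rw [ae_iff]
    convert hs using 2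
    ext x
    simp [and_comm]
  rw [← closure_Ioo hab]
  refine closure_minimal ((hdense.open_subset_closure_inter isOpen_Ioo).trans
    (closure_mono ?_)) isClosed_closure
  rintro x ⟨hx, hxs | hxc⟩
  · exact hxs
  · exact absurd (Ioo_subset_Icc_self hx) hxc

theorem exists_Ioo_add_zmul_subset_Icc {t : ℝ} (ht : 0 < t) (α β u : ℝ) :
    ∃ m : ℤ, Ioo (m * t + α) (m * t + β) ⊆ Icc (u - (t + (β - α))) u := by
  set v := (u - (t + (β - α)) - α) / t
  refine ⟨⌈v⌉, Ioo_subset_Icc_self.trans (Icc_subset_Icc ?_ ?_)⟩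
  · linarith [(div_le_iff₀ ht).1 (Int.le_ceil v)]
  · linarith [(lt_div_iff₀ ht).1 (sub_lt_iff_lt_add.2 (Int.ceil_lt_add_one v))]

theorem isPorous_setOf_forall_mul_notMem_Ioo {q : ℕ → ℝ} (hq : Tendsto q atTop atTop) {t α β : ℝ}
    (ht : 0 < t) (hαβ : α < β) (K : ℕ) :
    IsPorous ((β - α) / (t + (β - α)))
      {x | ∀ k ≥ K, ∀ m : ℤ, q k * x ∉ Ioo (m * t + α) (m * t + β)} := by
  intro x _
  have hL : 0 < t + (β - α) := by linarith
  have hscale : Tendsto (fun k => (t + (β - α)) / q k) atTop (𝓝[>] 0) :=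
    tendsto_nhdsWithin_iff.2 ⟨hq.const_div_atTop _,
      (hq.eventually_gt_atTop 0).mono fun k hk => div_pos hL hk⟩
  refine hscale.frequently (Eventually.frequently ?_)
  filter_upwards [eventually_ge_atTop K, hq.eventually_gt_atTop 0] with k hk hqk
  obtain ⟨m, hm⟩ := exists_Ioo_add_zmul_subset_Icc ht α β (q k * x)
  refine ⟨(m * t + α) / q k, (m * t + β) / q k, le_of_eq (by field_simp; ring), ?_, ?_⟩
  · rw [← preimage_const_mul_Ioo₀ _ _ hqk]
    refine (preimage_mono hm).trans ?_
    rw [preimage_const_mul_Icc₀ _ _ hqk, Real.closedBall_eq_Icc]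
    exact Icc_subset_Icc (le_of_eq (by field_simp))
      (by rw [mul_div_cancel_left₀ _ hqk.ne']; linarith [div_pos hL hqk])
  · rw [← preimage_const_mul_Ioo₀ _ _ hqk]
    exact disjoint_left.2 fun w hw hwx => hwx k hk m hw

theorem ae_frequently_mul_mem_Ioo_add_zmul {q : ℕ → ℝ} (hq : Tendsto q atTop atTop) {t α β : ℝ}
    (ht : 0 < t) (hαβ : α < β) :
    ∀ᵐ x, ∃ᶠ k in atTop, ∃ m : ℤ, q k * x ∈ Ioo (m * t + α) (m * t + β) := by
  rw [ae_iff]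
  refine measure_mono_null (fun x hx => ?_) (measure_iUnion_null fun K =>
    (isPorous_setOf_forall_mul_notMem_Ioo hq ht hαβ K).volume_eq_zero (by positivity))
  simp only [not_frequently, not_exists, eventually_atTop] at hx
  exact mem_iUnion.2 hx

theorem isGδ_setOf_infinite_setOf_mem {X ι : Type*} [TopologicalSpace X] [Countable ι]
    {U : ι → Set X} (hU : ∀ i, IsOpen (U i)) : IsGδ {x | {i | x ∈ U i}.Infinite} := by
  have hcount : {x | {i | x ∈ U i}.Infinite} = ⋂ F : Finset ι, ⋃ i ∉ F, U i := by
    ext x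
    simp only [mem_iInter, mem_iUnion, exists_prop]
    refine ⟨fun h F => ?_, fun h hfin => ?_⟩
    · obtain ⟨i, hi, hiF⟩ := h.exists_notMem_finset F
      exact ⟨i, hiF, hi⟩
    · obtain ⟨i, hiF, hi⟩ := h hfin.toFinset
      exact hiF (hfin.mem_toFinset.2 hi)
  rw [hcount]
  exact .iInter_of_isOpen fun F => isOpen_biUnion fun i _ => hU i

def ratioPairs (A₀ A₁ σ p b : ℝ) : Set (ℕ × ℕ) :=
  {kn | 0 < kn.1 ∧ kn.1 < kn.2 ∧ A₀ < Real.rpow b (p ^ kn.1) / σ ^ (kn.2 - kn.1) ∧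
    Real.rpow b (p ^ kn.1) / σ ^ (kn.2 - kn.1) < A₁}

theorem isGδ_setOf_ratioPairs_infinite (A₀ A₁ σ : ℝ) {p : ℝ} (hp : 0 ≤ p) :
    IsGδ {b | (ratioPairs A₀ A₁ σ p b).Infinite} := by
  refine isGδ_setOf_infinite_setOf_mem fun kn => ?_
  have hratio : Continuous fun b : ℝ => Real.rpow b (p ^ kn.1) / σ ^ (kn.2 - kn.1) :=
    (Real.continuous_rpow_const (pow_nonneg hp _)).div_const _
  exact isOpen_const.inter (isOpen_const.inter
    ((isOpen_lt continuous_const hratio).inter (isOpen_lt hratio continuous_const)))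

theorem rpow_exp_neg_div_pow (x q : ℝ) {σ : ℝ} (hσ : 0 < σ) (m : ℕ) :
    Real.rpow (Real.exp (-x)) q / σ ^ m = Real.exp (m * -Real.log σ - q * x) := by
  rw [Real.rpow_eq_pow, ← Real.exp_log hσ, ← Real.exp_nat_mul, Real.log_exp, ← Real.exp_mul,
    ← Real.exp_sub]
  ring_nf

theorem mk_add_mem_ratioPairs_exp_neg {A₀ A₁ σ p x : ℝ} (hA₀ : 0 < A₀) (hA₁ : 0 < A₁)
    (hσ : 0 < σ) {k m : ℕ} (hk : 0 < k) (hm : 0 < m)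
    (h : p ^ k * x ∈ Ioo (m * -Real.log σ + -Real.log A₁) (m * -Real.log σ + -Real.log A₀)) :
    (k, k + m) ∈ ratioPairs A₀ A₁ σ p (Real.exp (-x)) := by
  refine ⟨hk, by omega, ?_, ?_⟩ <;>
    simp only [add_tsub_cancel_left, rpow_exp_neg_div_pow _ _ hσ]
  · exact (Real.log_lt_iff_lt_exp hA₀).1 (by linarith [h.2])
  · exact (Real.lt_log_iff_exp_lt hA₁).1 (by linarith [h.1])

theorem ratioPairs_exp_neg_infinite {A₀ A₁ σ p x : ℝ} (hA₀ : 0 < A₀) (hA₁ : 0 < A₁)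
    (hσ : σ ∈ Ioo 0 1) (hp : 1 < p) (hx : 0 < x)
    (h : ∃ᶠ k in atTop, ∃ m : ℤ,
      p ^ k * x ∈ Ioo (m * -Real.log σ + -Real.log A₁) (m * -Real.log σ + -Real.log A₀)) :
    (ratioPairs A₀ A₁ σ p (Real.exp (-x))).Infinite := by
  have hlogσ : Real.log σ < 0 := Real.log_neg hσ.1 hσ.2
  have hgrow : Tendsto (fun k => p ^ k * x) atTop atTop :=
    (tendsto_pow_atTop_atTop_of_one_lt hp).atTop_mul_const hx
  have hks := Nat.frequently_atTop_iff_infinite.1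
    (h.and_eventually ((eventually_gt_atTop 0).and (hgrow.eventually_gt_atTop (-Real.log A₀))))
  refine Infinite.of_image Prod.fst (hks.mono ?_)
  rintro k ⟨⟨m, hmem⟩, hk, hlarge⟩
  have hm : 0 < m := by
    by_contra! hm
    nlinarith [hmem.2, (Int.cast_nonpos (R := ℝ)).2 hm]
  lift m to ℕ using hm.le
  exact ⟨(k, k + m), mk_add_mem_ratioPairs_exp_neg hA₀ hA₁ hσ.1 hk (by omega) hmem, rfl⟩

theorem volume_Icc_diff_setOf_ratioPairs_infinite {A₀ A₁ σ p : ℝ} (hA₀ : 0 < A₀) (hA : A₀ < A₁)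
    (hσ : σ ∈ Ioo 0 1) (hp : 1 < p) :
    volume (Icc 0 1 \ {b | (ratioPairs A₀ A₁ σ p b).Infinite}) = 0 := by
  have hgood := ae_frequently_mul_mem_Ioo_add_zmul (tendsto_pow_atTop_atTop_of_one_lt hp)
    (neg_pos.2 (Real.log_neg hσ.1 hσ.2)) (neg_lt_neg (Real.log_lt_log hA₀ hA))
  rw [ae_iff] at hgood
  refine measure_mono_null (fun b ⟨hb, hbS⟩ => ?_) (measure_union_null
    ((toFinite {0, 1}).measure_zero volume)
    (addHaar_image_eq_zero_of_differentiableOn_of_addHaar_eq_zero volume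
      (f := fun x => Real.exp (-x)) (by fun_prop) hgood))
  rcases eq_endpoints_or_mem_Ioo_of_mem_Icc hb with rfl | rfl | ⟨hb0, hb1⟩
  · exact .inl (by simp)
  · exact .inl (by simp)
  refine .inr ⟨-Real.log b, fun hfreq => hbS ?_, by simp [Real.exp_log hb0]⟩
  simpa [Real.exp_log hb0] using ratioPairs_exp_neg_infinite hA₀ (hA₀.trans hA) hσ hp
    (neg_pos.2 (Real.log_neg hb0 hb1)) hfreq

/-- **A dense Gδ set of full measure in the parameter space.** Given any
`0 < A₀ < A₁`, `0 < σ < 1` and `p ≥ 2`, the set of parameters `b ∈ [0,1]` for which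
there are infinitely many pairs `0 < k < n` satisfying `A₀ < b^{p^k}/σ^{n-k} < A₁` is
a dense Gδ subset of `[0,1]` with full Lebesgue measure. -/
theorem dense_gdelta_full_measure (A₀ A₁ σ p : ℝ)
    (hA₀ : 0 < A₀) (hA : A₀ < A₁) (hσ : σ ∈ Set.Ioo (0:ℝ) 1) (hp : 2 ≤ p)
    (S : Set ℝ)
    (hS : S = {b ∈ Set.Icc (0:ℝ) 1 |
      {kn : ℕ × ℕ | 0 < kn.1 ∧ kn.1 < kn.2 ∧
        A₀ < Real.rpow b (p ^ kn.1) / σ ^ (kn.2 - kn.1) ∧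
        Real.rpow b (p ^ kn.1) / σ ^ (kn.2 - kn.1) < A₁}.Infinite}) :
    (∃ T : Set ℝ, IsGδ T ∧ S = T ∩ Set.Icc (0:ℝ) 1) ∧
    Set.Icc (0:ℝ) 1 ⊆ closure S ∧
    volume (Set.Icc (0:ℝ) 1 \ S) = 0 := by
  have hST : S = {b | (ratioPairs A₀ A₁ σ p b).Infinite} ∩ Icc 0 1 := by
    rw [hS, inter_comm]
    rfl
  have hnull : volume (Icc (0:ℝ) 1 \ S) = 0 := by
    rw [hST, sdiff_inter_self_eq_sdiff]
    exact volume_Icc_diff_setOf_ratioPairs_infinite hA₀ hA hσ (by linarith)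
  exact ⟨⟨_, isGδ_setOf_ratioPairs_infinite A₀ A₁ σ (by linarith), hST⟩,
    Icc_subset_closure_of_volume_diff_eq_zero zero_ne_one hnull, hnull⟩
end
end
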